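/- Intermediate-time velocity degeneracy: suppose P₀, v₀ are smooth on Ω = {(x,z) : h_bot(x) < z < h_soil(x)} and satisfy ∂(v₀·e₃)/∂z = 0 in Ω, v₀·e₃ = 0 on z = h_bot(x), and v₀ = -k_r(P₀)((1/(ρg)) ∂P₀/∂z + 1) K₀ e₃ with k_r(P₀) > 0 and (K₀e₃)·e₃ = K_zz > 0. Then v₀ = 0 in Ω and there is a function H₀(t,x), independent of z, with P₀(t,x,z) = ρg(H₀(t,x) - z). -/
import Mathlib


open Matrix

lemma aux_const_of_deriv_zero (f f' : ℝ → ℝ) (a b : ℝ)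
    (hd : ∀ z ∈ Set.Ioo a b, HasDerivAt f (f' z) z)
    (h0 : ∀ z ∈ Set.Ioo a b, f' z = 0) :
    ∀ z₁ ∈ Set.Ioo a b, ∀ z₂ ∈ Set.Ioo a b, f z₁ = f z₂ := by
  have key : ∀ z₁ ∈ Set.Ioo a b, ∀ z₂ ∈ Set.Ioo a b, z₁ < z₂ → f z₁ = f z₂ := by
    intro z₁ h₁ z₂ h₂ hlt
    have hsub : Set.Icc z₁ z₂ ⊆ Set.Ioo a b := by
      intro y hy; exact ⟨lt_of_lt_of_le h₁.1 hy.1, lt_of_le_of_lt hy.2 h₂.2⟩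
    have hcont : ContinuousOn f (Set.Icc z₁ z₂) := fun y hy =>
      ((hd y (hsub hy)).continuousAt).continuousWithinAt
    have hderiv : ∀ y ∈ Set.Ioo z₁ z₂, HasDerivAt f 0 y := by
      intro y hy
      have hy' : y ∈ Set.Ioo a b := hsub ⟨le_of_lt hy.1, le_of_lt hy.2⟩
      have := hd y hy'
      rwa [h0 y hy'] at this
    obtain ⟨c, hc, hceq⟩ := exists_hasDerivAt_eq_slope f (fun _ => 0) hlt hcont hderiv
    rw [eq_comm, div_eq_iff (by linarith : z₂ - z₁ ≠ 0)] at hceq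
    linarith [hceq]
  intro z₁ h₁ z₂ h₂
  rcases lt_trichotomy z₁ z₂ with h | h | h
  · exact key z₁ h₁ z₂ h₂ h
  · rw [h]
  · exact (key z₂ h₂ z₁ h₁ h).symm


/-- Intermediate-time velocity degeneracy: if `∂_z(v₀·e₃) = 0` in `Ω`, `v₀·e₃ = 0` on
the bottom `z = h_bot(x)`, and `v₀ = -k_r(P₀)((1/(ρg))∂_z P₀ + 1) K₀ e₃` with
`k_r > 0` and `K_zz = (K₀)₂₂ > 0`, then `v₀ = 0` in `Ω` and the pressure is hydrostatic:
`P₀(t,x,z) = ρg(H₀(t,x) - z)` for some function `H₀` independent of `z`. -/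
theorem intermediate_time_degeneracy
    (ρ g : ℝ) (hρ : 0 < ρ) (hg : 0 < g)
    (hbot hsoil : (ℝ × ℝ) → ℝ)
    (kr : ℝ → ℝ) (hkr : ∀ p : ℝ, 0 < kr p)
    (K₀ : (ℝ × ℝ) → ℝ → Matrix (Fin 3) (Fin 3) ℝ)
    (hKpd : ∀ x z, (K₀ x z).PosDef) (hKzz : ∀ x z, 0 < K₀ x z 2 2)
    (P₀ P₀z : ℝ → (ℝ × ℝ) → ℝ → ℝ)
    (v₀ : ℝ → (ℝ × ℝ) → ℝ → Fin 3 → ℝ)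
    -- ∂_z (v₀ · e₃) = 0 in Ω
    (hdzv : ∀ t x z, hbot x < z → z < hsoil x →
        HasDerivAt (fun ζ => v₀ t x ζ 2) 0 z)
    (hvcont : ∀ t x, Continuous fun ζ => v₀ t x ζ 2)
    -- v₀ · e₃ = 0 on the bottom boundary
    (hbc : ∀ t x, v₀ t x (hbot x) 2 = 0)
    -- vertical Darcy law with derivative witness P₀z = ∂_z P₀
    (hPz : ∀ t x z, hbot x < z → z < hsoil x →
        HasDerivAt (fun ζ => P₀ t x ζ) (P₀z t x z) z)
    (hdarcy : ∀ t x z, hbot x < z → z < hsoil x →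
        v₀ t x z = (-(kr (P₀ t x z) * ((1 / (ρ * g)) * P₀z t x z + 1))) •
          ((K₀ x z).mulVec (Pi.single 2 1))) :
    (∀ t x z, hbot x < z → z < hsoil x → v₀ t x z = 0) ∧
    ∃ H₀ : ℝ → (ℝ × ℝ) → ℝ, ∀ t x z, hbot x < z → z < hsoil x →
      P₀ t x z = ρ * g * (H₀ t x - z) := by

  have hρg : ρ * g ≠ 0 := by positivity
  have hmain : ∀ t x z, hbot x < z → z < hsoil x →
      v₀ t x z = 0 ∧ P₀z t x z = -(ρ * g) := by
    intro t x z hz1 hz2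
    have hne : hbot x < hsoil x := lt_trans hz1 hz2
    have hconst := aux_const_of_deriv_zero (fun ζ => v₀ t x ζ 2) (fun _ => 0)
      (hbot x) (hsoil x) (fun y hy => hdzv t x y hy.1 hy.2) (fun _ _ => rfl)
    have hvz : v₀ t x z 2 = 0 := by
      have hlim : Filter.Tendsto (fun ζ' => v₀ t x ζ' 2)
          (nhdsWithin (hbot x) (Set.Ioi (hbot x))) (nhds (v₀ t x (hbot x) 2)) :=
        ((hvcont t x).tendsto _).mono_left nhdsWithin_le_nhds
      have heq : (fun ζ' => v₀ t x ζ' 2) =ᶠ[nhdsWithin (hbot x) (Set.Ioi (hbot x))]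
          fun _ => v₀ t x z 2 := by
        filter_upwards [Ioo_mem_nhdsGT_of_mem ⟨le_refl _, hne⟩] with y hy
        exact hconst y hy z ⟨hz1, hz2⟩
      have := tendsto_nhds_unique ((Filter.Tendsto.congr' heq) hlim) tendsto_const_nhds
      rw [hbc t x] at this
      exact this.symm
    have h2 := congrFun (hdarcy t x z hz1 hz2) 2
    rw [hvz] at h2
    have hcomp : Matrix.mulVec (K₀ x z) (Pi.single 2 1) 2 = K₀ x z 2 2 := by
      simp [Matrix.mulVec, dotProduct_single]
    rw [Pi.smul_apply, hcomp, smul_eq_mul] at h2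
    have hK : K₀ x z 2 2 ≠ 0 := ne_of_gt (hKzz x z)
    have hkr' : kr (P₀ t x z) ≠ 0 := ne_of_gt (hkr (P₀ t x z))
    have hs : (1 / (ρ * g)) * P₀z t x z + 1 = 0 := by
      by_contra hs
      exact (mul_ne_zero (neg_ne_zero.mpr (mul_ne_zero hkr' hs)) hK) h2.symm
    constructor
    · rw [hdarcy t x z hz1 hz2, hs]
      simp
    · field_simp at hs
      linarith
  refine ⟨fun t x z hz1 hz2 => (hmain t x z hz1 hz2).1, ?_⟩
  refine ⟨fun t x => P₀ t x ((hbot x + hsoil x) / 2) / (ρ * g) + (hbot x + hsoil x) / 2,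
    fun t x z hz1 hz2 => ?_⟩
  have hne : hbot x < hsoil x := lt_trans hz1 hz2
  set m := (hbot x + hsoil x) / 2 with hm
  have hmΩ : m ∈ Set.Ioo (hbot x) (hsoil x) := ⟨by rw [hm]; linarith, by rw [hm]; linarith⟩
  have hconst := aux_const_of_deriv_zero (fun ζ => P₀ t x ζ + ρ * g * ζ)
    (fun ζ => P₀z t x ζ + ρ * g) (hbot x) (hsoil x)
    (fun y hy => (hPz t x y hy.1 hy.2).add (by
      simpa using (hasDerivAt_id y).const_mul (ρ * g)))
    (fun y hy => by show P₀z t x y + ρ * g = 0; rw [(hmain t x y hy.1 hy.2).2]; ring)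
  have := hconst z ⟨hz1, hz2⟩ m hmΩ
  have hc : ρ * g * (P₀ t x m / (ρ * g)) = P₀ t x m := by field_simp
  rw [mul_sub, mul_add, hc, ← hm]
  linarith
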